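/- arXiv:1905.11014 — 4 statements merged into one kernel-verified Lean document; each statement's English description precedes it below -/
import Mathlib

section
/- Let a ≥ 1 and x ≥ 0 be real numbers, and let ι ∈ [0,1]. Then min{a + x + x², x³} ≤ 3 · a^{(1-ι)/3} · x^{2+ι}. -/
/-!
With `b = a^{1/3} ≥ 1` the right-hand side is `3 b^{1-ι} x^{2+ι}`, and `x³ = x^{1-ι} x^{2+ι}`,
`a = b^{1-ι} b^{2+ι}`. If `x ≤ b` the first factorisation bounds `x³`; if `x ≥ b` the second
bounds `a`, while `x ≤ x² ≤ x^{2+ι}` bound the other two terms of `a + x + x²`.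
-/

namespace Real

lemma rpow_add_le_mul_rpow_of_le {x b s t : ℝ} (hx : 0 ≤ x) (hxb : x ≤ b) (hs : 0 ≤ s)
    (ht : 0 ≤ t) : x ^ (s + t) ≤ b ^ s * x ^ t := by
  rw [rpow_add_of_nonneg hx hs ht]
  gcongr

lemma rpow_add_le_mul_rpow_of_ge {x b s t : ℝ} (hb : 0 < b) (hbx : b ≤ x) (ht : 0 ≤ t) :
    b ^ (s + t) ≤ b ^ s * x ^ t := by
  rw [rpow_add hb]
  gcongr

lemma sq_le_mul_rpow {x b s t : ℝ} (hx : 1 ≤ x) (hb : 1 ≤ b) (hs : 0 ≤ s) (ht : 2 ≤ t) :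
    x ^ 2 ≤ b ^ s * x ^ t :=
  calc x ^ 2 = x ^ (2 : ℝ) := (rpow_ofNat x 2).symm
    _ ≤ x ^ t := rpow_le_rpow_of_exponent_le hx ht
    _ ≤ b ^ s * x ^ t :=
      le_mul_of_one_le_left (by positivity) (one_le_rpow hb hs)

end Real

theorem min_bound_rpow (a x ι : ℝ) (ha : 1 ≤ a) (hx : 0 ≤ x) (hι0 : 0 ≤ ι) (hι1 : ι ≤ 1) :
    min (a + x + x ^ 2) (x ^ 3) ≤ 3 * a ^ ((1 - ι) / 3) * x ^ (2 + ι) := by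
  set b := a ^ ((3 : ℕ)⁻¹ : ℝ)
  have hb_cube : b ^ 3 = a := Real.rpow_inv_natCast_pow (by linarith) three_ne_zero
  have hb : 1 ≤ b := Real.one_le_rpow ha (by positivity)
  have hcoef : a ^ ((1 - ι) / 3) = b ^ (1 - ι) := by
    rw [← Real.rpow_mul (by linarith)]
    ring_nf
  have hsplit : ∀ y : ℝ, y ^ 3 = y ^ ((1 - ι) + (2 + ι)) := fun y => by norm_num
  have hs : 0 ≤ 1 - ι := by linarith
  have hrhs : 0 ≤ b ^ (1 - ι) * x ^ (2 + ι) := by positivity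
  rw [hcoef, mul_assoc]
  rcases le_total x b with hxb | hbx
  · have hcube : x ^ 3 ≤ b ^ (1 - ι) * x ^ (2 + ι) := by
      rw [hsplit]
      exact Real.rpow_add_le_mul_rpow_of_le hx hxb hs (by linarith)
    exact (min_le_right _ _).trans (by linarith)
  · have hx1 : 1 ≤ x := hb.trans hbx
    have ha_le : a ≤ b ^ (1 - ι) * x ^ (2 + ι) := by
      rw [← hb_cube, hsplit]
      exact Real.rpow_add_le_mul_rpow_of_ge (by linarith) hbx (by linarith)
    have hsq := Real.sq_le_mul_rpow hx1 hb hs (by linarith : (2 : ℝ) ≤ 2 + ι)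
    have hx_le_sq : x ≤ x ^ 2 := by nlinarith
    exact (min_le_left _ _).trans (by linarith)
end

section
/- Let a ≥ 1 and ι ∈ [0,1]. For every x ≥ 0, min{max{a, x, x²}, x³} ≤ a^{(1-ι)/3} x^{2+ι}. (This can be verified by splitting into the cases x ≤ 1, 1 < x ≤ a^{1/3}, a^{1/3} < x ≤ a^{1/2}, and x > a^{1/2}.) -/
/-!
Write `a = b ^ 3` with `b ≥ 1`, so that the factor `a ^ ((1 - ι) / 3)` is `b ^ (1 - ι)`.
If `x ≤ b`, then `x ^ 3 = x ^ (1 - ι) * x ^ (2 + ι) ≤ b ^ (1 - ι) * x ^ (2 + ι)`.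
If `x > b`, then `x > 1`, so the maximum is `b ^ 3` or `x ^ 2`: the first is
`b ^ (1 - ι) * b ^ (2 + ι)`, and the second is at most `x ^ (2 + ι)`.
-/

open Real

lemma pow_three_eq_rpow_mul_rpow {x : ℝ} (hx : 0 ≤ x) (ι : ℝ) :
    x ^ 3 = x ^ (1 - ι) * x ^ (2 + ι) := by
  rw [← rpow_add' hx (by norm_num), ← rpow_natCast]
  norm_num

lemma min_max_pow_le_rpow {b x ι : ℝ} (hb : 1 ≤ b) (hx : 0 ≤ x) (hι0 : 0 ≤ ι) (hι1 : ι ≤ 1) :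
    min (max (b ^ 3) (max x (x ^ 2))) (x ^ 3) ≤ b ^ (1 - ι) * x ^ (2 + ι) := by
  rcases le_or_gt x b with hxb | hbx
  · calc min (max (b ^ 3) (max x (x ^ 2))) (x ^ 3) ≤ x ^ 3 := min_le_right _ _
      _ = x ^ (1 - ι) * x ^ (2 + ι) := pow_three_eq_rpow_mul_rpow hx ι
      _ ≤ b ^ (1 - ι) * x ^ (2 + ι) := by gcongr
  · have hx1 : 1 ≤ x := hb.trans hbx.le
    have hsq : x ^ 2 ≤ b ^ (1 - ι) * x ^ (2 + ι) :=
      calc x ^ 2 = 1 * x ^ (2 : ℝ) := by norm_cast; ring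
        _ ≤ b ^ (1 - ι) * x ^ (2 + ι) := by
          gcongr
          · exact one_le_rpow hb (by linarith)
          · linarith
    refine (min_le_left _ _).trans (max_le ?_ (max_le ?_ hsq))
    · calc b ^ 3 = b ^ (1 - ι) * b ^ (2 + ι) := pow_three_eq_rpow_mul_rpow (by linarith) ι
        _ ≤ b ^ (1 - ι) * x ^ (2 + ι) := by gcongr
    · nlinarith

theorem min_max_le_rpow (a x ι : ℝ) (ha : 1 ≤ a) (hx : 0 ≤ x) (hι0 : 0 ≤ ι) (hι1 : ι ≤ 1) :
    min (max a (max x (x ^ 2))) (x ^ 3) ≤ a ^ ((1 - ι) / 3) * x ^ (2 + ι) := by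
  set b := a ^ (3⁻¹ : ℝ)
  have hb : 1 ≤ b := one_le_rpow ha (by norm_num)
  have hb_cube : b ^ 3 = a := by
    simpa using rpow_inv_natCast_pow (n := 3) (by linarith) (by norm_num)
  have hfactor : a ^ ((1 - ι) / 3) = b ^ (1 - ι) := by
    rw [← rpow_mul (by linarith)]
    ring_nf
  rw [hfactor, ← hb_cube]
  exact min_max_pow_le_rpow hb hx hι0 hι1
end

section
/- Let g : ℝ → ℝ be three times continuously differentiable with ‖g'‖_∞ ≤ δ^{-1}, ‖g''‖_∞ ≤ C δ^{-1} γ, ‖g'''‖_∞ ≤ C δ^{-1} γ², and let ψ_γ(x) = γ^{-1} log(∑_{j=1}^d exp(γ x_j)). Then f = g ∘ ψ_γ satisfies, for every x ∈ ℝ^d, ∑_{j,k,ℓ=1}^d |∂_j ∂_k ∂_ℓ f(x)| ≤ ‖g'''‖_∞ + 6γ‖g''‖_∞ + 6γ²‖g'‖_∞ ≤ (7C + 6) γ² δ^{-1}. -/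
open Finset


noncomputable def Sf (γ : ℝ) (x : Fin d → ℝ) : ℝ := ∑ m, Real.exp (γ * x m)
noncomputable def Pf (γ : ℝ) (l : Fin d) (x : Fin d → ℝ) : ℝ := Real.exp (γ * x l) / Sf γ x
noncomputable def ψf (γ : ℝ) (x : Fin d → ℝ) : ℝ := γ⁻¹ * Real.log (Sf γ x)

noncomputable def Lψ (γ : ℝ) (x : Fin d → ℝ) : (Fin d → ℝ) →L[ℝ] ℝ :=
  γ⁻¹ • ((Sf γ x)⁻¹ • ∑ m, Real.exp (γ * x m) • (γ • (ContinuousLinearMap.proj m : (Fin d → ℝ) →L[ℝ] ℝ)))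

noncomputable def LP (γ : ℝ) (l : Fin d) (x : Fin d → ℝ) : (Fin d → ℝ) →L[ℝ] ℝ :=
  Pf γ l x • (γ • (ContinuousLinearMap.proj l : (Fin d → ℝ) →L[ℝ] ℝ) - γ • Lψ γ x)

lemma Sf_pos (γ : ℝ) (hd : 1 ≤ d) (x : Fin d → ℝ) : 0 < Sf γ x :=
  Finset.sum_pos (fun m _ => Real.exp_pos _) ⟨⟨0, hd⟩, Finset.mem_univ _⟩

lemma Pf_pos (γ : ℝ) (hd : 1 ≤ d) (l : Fin d) (x : Fin d → ℝ) : 0 < Pf γ l x :=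
  div_pos (Real.exp_pos _) (Sf_pos γ hd x)

lemma Pf_sum (γ : ℝ) (hd : 1 ≤ d) (x : Fin d → ℝ) : ∑ m, Pf γ m x = 1 := by
  simp only [Pf]
  rw [← Finset.sum_div]
  exact div_self (Sf_pos γ hd x).ne'

lemma hasFDerivAt_Sf (γ : ℝ) (x : Fin d → ℝ) :
    HasFDerivAt (Sf γ)
      (∑ m, Real.exp (γ * x m) • (γ • (ContinuousLinearMap.proj m : (Fin d → ℝ) →L[ℝ] ℝ))) x := by
  apply HasFDerivAt.fun_sum
  intro m _
  exact ((ContinuousLinearMap.proj m : (Fin d → ℝ) →L[ℝ] ℝ).hasFDerivAt.const_mul γ).exp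

lemma hasFDerivAt_ψf (γ : ℝ) (hd : 1 ≤ d) (x : Fin d → ℝ) :
    HasFDerivAt (ψf γ) (Lψ γ x) x :=
  (((hasFDerivAt_Sf γ x).log (Sf_pos γ hd x).ne').const_mul γ⁻¹)

lemma Lψ_single (γ : ℝ) (hγ : γ ≠ 0) (x : Fin d → ℝ) (l : Fin d) :
    Lψ γ x (Pi.single l 1) = Pf γ l x := by
  simp only [Lψ, ContinuousLinearMap.smul_apply, ContinuousLinearMap.sum_apply,
    ContinuousLinearMap.proj_apply, Pi.single_apply, smul_eq_mul, mul_ite, mul_one, mul_zero]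
  rw [Finset.sum_ite_eq' Finset.univ l (fun m => Real.exp (γ * x m) * γ)]
  simp [Pf, div_eq_mul_inv]
  field_simp

lemma Pf_eq (γ : ℝ) (hγ : γ ≠ 0) (hd : 1 ≤ d) (l : Fin d) (x : Fin d → ℝ) :
    Pf γ l x = Real.exp (γ * x l - γ * ψf γ x) := by
  have h1 : γ * ψf γ x = Real.log (Sf γ x) := by
    rw [ψf]; field_simp
  rw [Real.exp_sub, h1, Real.exp_log (Sf_pos γ hd x), Pf]

lemma hasFDerivAt_Pf (γ : ℝ) (hγ : γ ≠ 0) (hd : 1 ≤ d) (l : Fin d) (x : Fin d → ℝ) :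
    HasFDerivAt (Pf γ l) (LP γ l x) x := by
  have hfun : Pf γ l = fun x : Fin d → ℝ => Real.exp (γ * x l - γ * ψf γ x) :=
    funext fun x => Pf_eq γ hγ hd l x
  have hin : HasFDerivAt (fun x : Fin d → ℝ => γ * x l - γ * ψf γ x)
      (γ • (ContinuousLinearMap.proj l : (Fin d → ℝ) →L[ℝ] ℝ) - γ • Lψ γ x) x :=
    ((ContinuousLinearMap.proj l : (Fin d → ℝ) →L[ℝ] ℝ).hasFDerivAt.const_mul γ).sub
      ((hasFDerivAt_ψf γ hd x).const_mul γ)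
  have := hin.exp
  rw [LP, Pf_eq γ hγ hd l x]
  rwa [hfun]

lemma LP_single (γ : ℝ) (hγ : γ ≠ 0) (x : Fin d → ℝ) (l k : Fin d) :
    LP γ l x (Pi.single k 1)
      = γ * ((if k = l then (1:ℝ) else 0) * Pf γ l x - Pf γ l x * Pf γ k x) := by
  simp only [LP, ContinuousLinearMap.smul_apply, ContinuousLinearMap.sub_apply,
    ContinuousLinearMap.proj_apply, Pi.single_apply, Lψ_single γ hγ x k, smul_eq_mul]
  rcases eq_or_ne k l with h | h
  · subst h; simp; ring
  · simp [h, Ne.symm h]; ring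

lemma stage1 (γ : ℝ) (hd : 1 ≤ d) (hγ : γ ≠ 0) (g : ℝ → ℝ) (hg1 : Differentiable ℝ g)
    (z : Fin d → ℝ) (l : Fin d) :
    fderiv ℝ (fun w : Fin d → ℝ => g (ψf γ w)) z (Pi.single l 1)
      = deriv g (ψf γ z) * Pf γ l z := by
  have h := ((hg1 (ψf γ z)).hasDerivAt).comp_hasFDerivAt z (hasFDerivAt_ψf γ hd z)
  have heq : fderiv ℝ (fun w : Fin d → ℝ => g (ψf γ w)) z = deriv g (ψf γ z) • Lψ γ z :=
    h.fderiv
  rw [heq]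
  simp [Lψ_single γ hγ z l]

lemma stage2 (γ : ℝ) (hd : 1 ≤ d) (hγ : γ ≠ 0) (g : ℝ → ℝ)
    (hg2 : Differentiable ℝ (deriv g)) (y : Fin d → ℝ) (l k : Fin d) :
    fderiv ℝ (fun z : Fin d → ℝ => deriv g (ψf γ z) * Pf γ l z) y (Pi.single k 1)
      = deriv (deriv g) (ψf γ y) * Pf γ k y * Pf γ l y
        + deriv g (ψf γ y) * (γ * ((if k = l then (1:ℝ) else 0) * Pf γ l y
            - Pf γ l y * Pf γ k y)) := by
  have hA : HasFDerivAt (fun z : Fin d → ℝ => deriv g (ψf γ z))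
      (deriv (deriv g) (ψf γ y) • Lψ γ y) y :=
    ((hg2 (ψf γ y)).hasDerivAt).comp_hasFDerivAt y (hasFDerivAt_ψf γ hd y)
  have h := hA.mul (hasFDerivAt_Pf γ hγ hd l y)
  have heq : fderiv ℝ (fun z : Fin d → ℝ => deriv g (ψf γ z) * Pf γ l z) y
      = deriv g (ψf γ y) • LP γ l y + Pf γ l y • (deriv (deriv g) (ψf γ y) • Lψ γ y) :=
    h.fderiv
  rw [heq]
  simp only [ContinuousLinearMap.add_apply, ContinuousLinearMap.smul_apply,
    LP_single γ hγ y l k, Lψ_single γ hγ y k, smul_eq_mul]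
  ring

lemma stage3 (γ : ℝ) (hd : 1 ≤ d) (hγ : γ ≠ 0) (g : ℝ → ℝ)
    (hg2 : Differentiable ℝ (deriv g)) (hg3 : Differentiable ℝ (deriv (deriv g)))
    (x : Fin d → ℝ) (j k l : Fin d) :
    fderiv ℝ (fun y : Fin d → ℝ =>
        deriv (deriv g) (ψf γ y) * Pf γ k y * Pf γ l y
          + deriv g (ψf γ y) * (γ * ((if k = l then (1:ℝ) else 0) * Pf γ l y
              - Pf γ l y * Pf γ k y))) x (Pi.single j 1)
      = deriv (deriv (deriv g)) (ψf γ x) * (Pf γ j x * Pf γ k x * Pf γ l x)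
        + deriv (deriv g) (ψf γ x) * (γ *
            ((if j = k then (1:ℝ) else 0) * (Pf γ k x * Pf γ l x)
              + (if j = l then (1:ℝ) else 0) * (Pf γ k x * Pf γ l x)
              + (if k = l then (1:ℝ) else 0) * (Pf γ j x * Pf γ l x)
              - 3 * (Pf γ j x * Pf γ k x * Pf γ l x)))
        + deriv g (ψf γ x) * (γ ^ 2 *
            ((if k = l then (1:ℝ) else 0) * (if j = l then (1:ℝ) else 0) * Pf γ l x
              - (if k = l then (1:ℝ) else 0) * (Pf γ j x * Pf γ l x)
              - (if j = k then (1:ℝ) else 0) * (Pf γ k x * Pf γ l x)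
              - (if j = l then (1:ℝ) else 0) * (Pf γ k x * Pf γ l x)
              + 2 * (Pf γ j x * Pf γ k x * Pf γ l x))) := by
  have hA : HasFDerivAt (fun z : Fin d → ℝ => deriv (deriv g) (ψf γ z))
      (deriv (deriv (deriv g)) (ψf γ x) • Lψ γ x) x :=
    ((hg3 (ψf γ x)).hasDerivAt).comp_hasFDerivAt x (hasFDerivAt_ψf γ hd x)
  have hB : HasFDerivAt (fun z : Fin d → ℝ => deriv g (ψf γ z))
      (deriv (deriv g) (ψf γ x) • Lψ γ x) x :=
    ((hg2 (ψf γ x)).hasDerivAt).comp_hasFDerivAt x (hasFDerivAt_ψf γ hd x)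
  have hPk := hasFDerivAt_Pf γ hγ hd k x
  have hPl := hasFDerivAt_Pf γ hγ hd l x
  have h := ((hA.mul hPk).mul hPl).add
    (hB.mul (((hPl.const_mul (if k = l then (1:ℝ) else 0)).sub (hPl.mul hPk)).const_mul γ))
  have heq := h.fderiv
  rw [show (fun y : Fin d → ℝ =>
        deriv (deriv g) (ψf γ y) * Pf γ k y * Pf γ l y
          + deriv g (ψf γ y) * (γ * ((if k = l then (1:ℝ) else 0) * Pf γ l y
              - Pf γ l y * Pf γ k y)))
      = ((fun z : Fin d → ℝ => deriv (deriv g) (ψf γ z)) * Pf γ k * Pf γ l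
          + (fun z : Fin d → ℝ => deriv g (ψf γ z))
            * fun y : Fin d → ℝ => γ * ((fun y : Fin d → ℝ => (if k = l then (1:ℝ) else 0) * Pf γ l y)
              - Pf γ l * Pf γ k) y) from rfl, heq]
  simp only [ContinuousLinearMap.add_apply, ContinuousLinearMap.smul_apply,
    ContinuousLinearMap.sub_apply, LP_single γ hγ x l j, LP_single γ hγ x k j,
    Lψ_single γ hγ x j, smul_eq_mul, Pi.mul_apply, Pi.sub_apply]
  ring


lemma wsum0 (Q : Fin d → ℝ) (hQ1 : ∑ m, Q m = 1) (c : ℝ) :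
    ∑ j : Fin d, ∑ k : Fin d, ∑ l : Fin d, c * (Q j * Q k * Q l) = c := by
  simp only [← Finset.mul_sum, hQ1, mul_one]

lemma wsum1 (Q : Fin d → ℝ) (hQ1 : ∑ m, Q m = 1) (c : ℝ) :
    ∑ j : Fin d, ∑ k : Fin d, ∑ l : Fin d,
      c * ((if j = k then (1:ℝ) else 0) * (Q k * Q l)) = c := by
  simp only [← Finset.mul_sum, ← Finset.sum_mul, hQ1, mul_one, one_mul, mul_ite, mul_zero,
    ite_mul, zero_mul, Finset.sum_ite_irrel, Finset.sum_const_zero,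
    Finset.sum_ite_eq, Finset.sum_ite_eq', Finset.mem_univ, if_true]

lemma wsum2 (Q : Fin d → ℝ) (hQ1 : ∑ m, Q m = 1) (c : ℝ) :
    ∑ j : Fin d, ∑ k : Fin d, ∑ l : Fin d,
      c * ((if j = l then (1:ℝ) else 0) * (Q k * Q l)) = c := by
  simp only [← Finset.mul_sum, ← Finset.sum_mul, hQ1, mul_one, one_mul, mul_ite, mul_zero,
    ite_mul, zero_mul, Finset.sum_ite_irrel, Finset.sum_const_zero,
    Finset.sum_ite_eq, Finset.sum_ite_eq', Finset.mem_univ, if_true]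

lemma wsum3 (Q : Fin d → ℝ) (hQ1 : ∑ m, Q m = 1) (c : ℝ) :
    ∑ j : Fin d, ∑ k : Fin d, ∑ l : Fin d,
      c * ((if k = l then (1:ℝ) else 0) * (Q j * Q l)) = c := by
  simp only [← Finset.mul_sum, ← Finset.sum_mul, hQ1, mul_one, one_mul, mul_ite, mul_zero,
    ite_mul, zero_mul, Finset.sum_ite_irrel, Finset.sum_const_zero,
    Finset.sum_ite_eq, Finset.sum_ite_eq', Finset.mem_univ, if_true]

lemma wsum4 (Q : Fin d → ℝ) (hQ1 : ∑ m, Q m = 1) (c : ℝ) :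
    ∑ j : Fin d, ∑ k : Fin d, ∑ l : Fin d,
      c * ((if k = l then (1:ℝ) else 0) * (if j = l then (1:ℝ) else 0) * Q l) = c := by
  simp only [← Finset.mul_sum, ← Finset.sum_mul, hQ1, mul_one, one_mul, mul_ite, mul_zero,
    ite_mul, zero_mul, Finset.sum_ite_irrel, Finset.sum_const_zero,
    Finset.sum_ite_eq, Finset.sum_ite_eq', Finset.mem_univ, if_true]

lemma sum_bound (γ B1 B2 B3 G1 G2 G3 : ℝ) (hγ : 0 < γ)
    (h1 : |G1| ≤ B1) (h2 : |G2| ≤ B2) (h3 : |G3| ≤ B3)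
    (Q : Fin d → ℝ) (hQ : ∀ m, 0 < Q m) (hQ1 : ∑ m, Q m = 1) :
    ∑ j : Fin d, ∑ k : Fin d, ∑ l : Fin d,
      |G3 * (Q j * Q k * Q l)
        + G2 * (γ * ((if j = k then (1:ℝ) else 0) * (Q k * Q l)
              + (if j = l then (1:ℝ) else 0) * (Q k * Q l)
              + (if k = l then (1:ℝ) else 0) * (Q j * Q l)
              - 3 * (Q j * Q k * Q l)))
        + G1 * (γ ^ 2 * ((if k = l then (1:ℝ) else 0) * (if j = l then (1:ℝ) else 0) * Q l
              - (if k = l then (1:ℝ) else 0) * (Q j * Q l)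
              - (if j = k then (1:ℝ) else 0) * (Q k * Q l)
              - (if j = l then (1:ℝ) else 0) * (Q k * Q l)
              + 2 * (Q j * Q k * Q l)))|
      ≤ B3 + 6 * γ * B2 + 6 * γ ^ 2 * B1 := by
  have hB1 : 0 ≤ B1 := le_trans (abs_nonneg _) h1
  have hB2 : 0 ≤ B2 := le_trans (abs_nonneg _) h2
  have hB3 : 0 ≤ B3 := le_trans (abs_nonneg _) h3
  have key : ∀ j k l : Fin d,
      |G3 * (Q j * Q k * Q l)
        + G2 * (γ * ((if j = k then (1:ℝ) else 0) * (Q k * Q l)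
              + (if j = l then (1:ℝ) else 0) * (Q k * Q l)
              + (if k = l then (1:ℝ) else 0) * (Q j * Q l)
              - 3 * (Q j * Q k * Q l)))
        + G1 * (γ ^ 2 * ((if k = l then (1:ℝ) else 0) * (if j = l then (1:ℝ) else 0) * Q l
              - (if k = l then (1:ℝ) else 0) * (Q j * Q l)
              - (if j = k then (1:ℝ) else 0) * (Q k * Q l)
              - (if j = l then (1:ℝ) else 0) * (Q k * Q l)
              + 2 * (Q j * Q k * Q l)))|
      ≤ B3 * (Q j * Q k * Q l)
        + ((γ * B2) * ((if j = k then (1:ℝ) else 0) * (Q k * Q l))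
          + (γ * B2) * ((if j = l then (1:ℝ) else 0) * (Q k * Q l))
          + (γ * B2) * ((if k = l then (1:ℝ) else 0) * (Q j * Q l))
          + (3 * γ * B2) * (Q j * Q k * Q l))
        + ((γ ^ 2 * B1) * ((if k = l then (1:ℝ) else 0) * (if j = l then (1:ℝ) else 0) * Q l)
          + (γ ^ 2 * B1) * ((if k = l then (1:ℝ) else 0) * (Q j * Q l))
          + (γ ^ 2 * B1) * ((if j = k then (1:ℝ) else 0) * (Q k * Q l))
          + (γ ^ 2 * B1) * ((if j = l then (1:ℝ) else 0) * (Q k * Q l))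
          + (2 * γ ^ 2 * B1) * (Q j * Q k * Q l)) := by
    intro j k l
    have hQj := (hQ j).le; have hQk := (hQ k).le; have hQl := (hQ l).le
    have hm : 0 ≤ Q j * Q k * Q l := by positivity
    have ha : 0 ≤ (if j = k then (1:ℝ) else 0) * (Q k * Q l) := by
      by_cases h : j = k <;> simp [h] <;> positivity
    have hb : 0 ≤ (if j = l then (1:ℝ) else 0) * (Q k * Q l) := by
      by_cases h : j = l <;> simp [h] <;> positivity
    have hc : 0 ≤ (if k = l then (1:ℝ) else 0) * (Q j * Q l) := by
      by_cases h : k = l <;> simp [h] <;> positivity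
    have hdd : 0 ≤ (if k = l then (1:ℝ) else 0) * (if j = l then (1:ℝ) else 0) * Q l := by
      by_cases h : k = l <;> by_cases h' : j = l <;> simp [h, h'] <;> positivity
    have hR2 : |(if j = k then (1:ℝ) else 0) * (Q k * Q l)
              + (if j = l then (1:ℝ) else 0) * (Q k * Q l)
              + (if k = l then (1:ℝ) else 0) * (Q j * Q l)
              - 3 * (Q j * Q k * Q l)|
        ≤ (if j = k then (1:ℝ) else 0) * (Q k * Q l)
              + (if j = l then (1:ℝ) else 0) * (Q k * Q l)
              + (if k = l then (1:ℝ) else 0) * (Q j * Q l)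
              + 3 * (Q j * Q k * Q l) := by
      rw [abs_le]; constructor <;> linarith
    have hR3 : |(if k = l then (1:ℝ) else 0) * (if j = l then (1:ℝ) else 0) * Q l
              - (if k = l then (1:ℝ) else 0) * (Q j * Q l)
              - (if j = k then (1:ℝ) else 0) * (Q k * Q l)
              - (if j = l then (1:ℝ) else 0) * (Q k * Q l)
              + 2 * (Q j * Q k * Q l)|
        ≤ (if k = l then (1:ℝ) else 0) * (if j = l then (1:ℝ) else 0) * Q l
              + (if k = l then (1:ℝ) else 0) * (Q j * Q l)
              + (if j = k then (1:ℝ) else 0) * (Q k * Q l)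
              + (if j = l then (1:ℝ) else 0) * (Q k * Q l)
              + 2 * (Q j * Q k * Q l) := by
      rw [abs_le]; constructor <;> linarith
    have e1 : |G3 * (Q j * Q k * Q l)| ≤ B3 * (Q j * Q k * Q l) := by
      rw [abs_mul, abs_of_nonneg hm]
      exact mul_le_mul_of_nonneg_right h3 hm
    have e2 : |G2 * (γ * ((if j = k then (1:ℝ) else 0) * (Q k * Q l)
              + (if j = l then (1:ℝ) else 0) * (Q k * Q l)
              + (if k = l then (1:ℝ) else 0) * (Q j * Q l)
              - 3 * (Q j * Q k * Q l)))|
        ≤ B2 * (γ * ((if j = k then (1:ℝ) else 0) * (Q k * Q l)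
              + (if j = l then (1:ℝ) else 0) * (Q k * Q l)
              + (if k = l then (1:ℝ) else 0) * (Q j * Q l)
              + 3 * (Q j * Q k * Q l))) := by
      rw [abs_mul, abs_mul, abs_of_pos hγ]
      refine mul_le_mul h2 (mul_le_mul_of_nonneg_left hR2 hγ.le) (by positivity) hB2
    have e3 : |G1 * (γ ^ 2 * ((if k = l then (1:ℝ) else 0) * (if j = l then (1:ℝ) else 0) * Q l
              - (if k = l then (1:ℝ) else 0) * (Q j * Q l)
              - (if j = k then (1:ℝ) else 0) * (Q k * Q l)
              - (if j = l then (1:ℝ) else 0) * (Q k * Q l)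
              + 2 * (Q j * Q k * Q l)))|
        ≤ B1 * (γ ^ 2 * ((if k = l then (1:ℝ) else 0) * (if j = l then (1:ℝ) else 0) * Q l
              + (if k = l then (1:ℝ) else 0) * (Q j * Q l)
              + (if j = k then (1:ℝ) else 0) * (Q k * Q l)
              + (if j = l then (1:ℝ) else 0) * (Q k * Q l)
              + 2 * (Q j * Q k * Q l))) := by
      rw [abs_mul, abs_mul, abs_of_pos (by positivity : (0:ℝ) < γ ^ 2)]
      refine mul_le_mul h1 (mul_le_mul_of_nonneg_left hR3 (by positivity)) (by positivity) hB1
    calc _ ≤ _ := abs_add_three _ _ _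
      _ ≤ _ := add_le_add (add_le_add e1 e2) e3
      _ = _ := by ring
  calc ∑ j : Fin d, ∑ k : Fin d, ∑ l : Fin d, _ ≤ _ :=
        Finset.sum_le_sum fun j _ => Finset.sum_le_sum fun k _ =>
          Finset.sum_le_sum fun l _ => key j k l
    _ = B3 + 6 * γ * B2 + 6 * γ ^ 2 * B1 := by
        simp only [Finset.sum_add_distrib]
        rw [wsum0 Q hQ1, wsum1 Q hQ1, wsum2 Q hQ1, wsum3 Q hQ1, wsum4 Q hQ1,
          wsum0 Q hQ1, wsum3 Q hQ1, wsum1 Q hQ1, wsum2 Q hQ1, wsum0 Q hQ1]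
        ring


theorem third_partials_of_composition_bound
    (γ δ C : ℝ) (hγ : 0 < γ) (hδ : 0 < δ) (hC : 0 < C)
    (d : ℕ) (hd : 1 ≤ d)
    (g : ℝ → ℝ) (hg : ContDiff ℝ 3 g)
    (B1 B2 B3 : ℝ)
    (hB1 : ∀ t : ℝ, |deriv g t| ≤ B1)
    (hB2 : ∀ t : ℝ, |deriv (deriv g) t| ≤ B2)
    (hB3 : ∀ t : ℝ, |deriv (deriv (deriv g)) t| ≤ B3)
    (hB1' : B1 ≤ δ⁻¹) (hB2' : B2 ≤ C * δ⁻¹ * γ) (hB3' : B3 ≤ C * δ⁻¹ * γ ^ 2) :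
    ∀ x : Fin d → ℝ,
      (∑ j : Fin d, ∑ k : Fin d, ∑ l : Fin d,
        |fderiv ℝ (fun y : Fin d → ℝ =>
            fderiv ℝ (fun z : Fin d → ℝ =>
                fderiv ℝ (fun w : Fin d → ℝ =>
                    g (γ⁻¹ * Real.log (∑ m, Real.exp (γ * w m))))
                  z (Pi.single l 1))
              y (Pi.single k 1))
          x (Pi.single j 1)|)
        ≤ B3 + 6 * γ * B2 + 6 * γ ^ 2 * B1 ∧
      B3 + 6 * γ * B2 + 6 * γ ^ 2 * B1 ≤ (7 * C + 6) * γ ^ 2 * δ⁻¹ := by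
  intro x
  have hγ' : γ ≠ 0 := hγ.ne'
  have hg1 : Differentiable ℝ g := hg.differentiable (by norm_num)
  have hg' : ContDiff ℝ 2 (deriv g) := by
    have h : ContDiff ℝ ((2 : ℕ) + 1) g := by exact_mod_cast hg
    exact (contDiff_succ_iff_deriv.mp h).2.2
  have hg2 : Differentiable ℝ (deriv g) := hg'.differentiable (by norm_num)
  have hg'' : ContDiff ℝ 1 (deriv (deriv g)) := by
    have h : ContDiff ℝ ((1 : ℕ) + 1) (deriv g) := by exact_mod_cast hg'
    exact (contDiff_succ_iff_deriv.mp h).2.2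
  have hg3 : Differentiable ℝ (deriv (deriv g)) := hg''.differentiable (by norm_num)
  constructor
  · have keyfd : ∀ j k l : Fin d,
        fderiv ℝ (fun y : Fin d → ℝ =>
            fderiv ℝ (fun z : Fin d → ℝ =>
                fderiv ℝ (fun w : Fin d → ℝ =>
                    g (γ⁻¹ * Real.log (∑ m, Real.exp (γ * w m))))
                  z (Pi.single l 1))
              y (Pi.single k 1))
          x (Pi.single j 1)
        = deriv (deriv (deriv g)) (ψf γ x) * (Pf γ j x * Pf γ k x * Pf γ l x)
          + deriv (deriv g) (ψf γ x) * (γ *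
              ((if j = k then (1:ℝ) else 0) * (Pf γ k x * Pf γ l x)
                + (if j = l then (1:ℝ) else 0) * (Pf γ k x * Pf γ l x)
                + (if k = l then (1:ℝ) else 0) * (Pf γ j x * Pf γ l x)
                - 3 * (Pf γ j x * Pf γ k x * Pf γ l x)))
          + deriv g (ψf γ x) * (γ ^ 2 *
              ((if k = l then (1:ℝ) else 0) * (if j = l then (1:ℝ) else 0) * Pf γ l x
                - (if k = l then (1:ℝ) else 0) * (Pf γ j x * Pf γ l x)
                - (if j = k then (1:ℝ) else 0) * (Pf γ k x * Pf γ l x)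
                - (if j = l then (1:ℝ) else 0) * (Pf γ k x * Pf γ l x)
                + 2 * (Pf γ j x * Pf γ k x * Pf γ l x))) := by
      intro j k l
      have e1 : (fun z : Fin d → ℝ =>
          fderiv ℝ (fun w : Fin d → ℝ =>
              g (γ⁻¹ * Real.log (∑ m, Real.exp (γ * w m)))) z (Pi.single l 1))
          = fun z : Fin d → ℝ => deriv g (ψf γ z) * Pf γ l z :=
        funext fun z => stage1 γ hd hγ' g hg1 z l
      rw [e1]
      have e2 : (fun y : Fin d → ℝ =>
          fderiv ℝ (fun z : Fin d → ℝ => deriv g (ψf γ z) * Pf γ l z) y (Pi.single k 1))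
          = fun y : Fin d → ℝ =>
              deriv (deriv g) (ψf γ y) * Pf γ k y * Pf γ l y
                + deriv g (ψf γ y) * (γ * ((if k = l then (1:ℝ) else 0) * Pf γ l y
                    - Pf γ l y * Pf γ k y)) :=
        funext fun y => stage2 γ hd hγ' g hg2 y l k
      rw [e2]
      exact stage3 γ hd hγ' g hg2 hg3 x j k l
    simp only [keyfd]
    exact sum_bound γ B1 B2 B3 (deriv g (ψf γ x)) (deriv (deriv g) (ψf γ x))
      (deriv (deriv (deriv g)) (ψf γ x)) hγ (hB1 _) (hB2 _) (hB3 _)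
      (fun m => Pf γ m x) (fun m => Pf_pos γ hd m x) (Pf_sum γ hd x)
  · have k1 : 6 * γ * B2 ≤ 6 * γ * (C * δ⁻¹ * γ) :=
      mul_le_mul_of_nonneg_left hB2' (by positivity)
    have k2 : 6 * γ ^ 2 * B1 ≤ 6 * γ ^ 2 * δ⁻¹ :=
      mul_le_mul_of_nonneg_left hB1' (by positivity)
    nlinarith [hB3', k1, k2]
end

section
/- Let x ≥ 0, γ > 0, δ > 0 with γδ ≥ 1, and ι ∈ [0,1]. Then min{γδ + γx + γ²x², γ³x³} ≤ 3 (γδ)^{(1−ι)/3} (γx)^{2+ι}, and hence γ^{-1}δ^{-1} · min{γδ + γx + γ²x², γ³x³} ≤ 3 γ^{(4+2ι)/3} δ^{−(2+ι)/3} x^{2+ι}. -/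
/-! With `c = (γδ)^{1/3} ≥ 1` and `y = γx`, split `y³ = y^{1-ι} y^{2+ι}`. If `y ≤ c`, then
`y³ ≤ c^{1-ι} y^{2+ι}`. If `c ≤ y`, then `y ≥ 1`, so each of `c³ = c^{1-ι} c^{2+ι}`, `y` and `y²`
is at most `c^{1-ι} y^{2+ι}`. The second inequality is the first one multiplied by `γ⁻¹δ⁻¹`. -/

open Real

lemma cube_eq_rpow_mul_rpow {y : ℝ} (hy : 0 ≤ y) (ι : ℝ) : y ^ 3 = y ^ (1 - ι) * y ^ (2 + ι) := by
  rw [← rpow_add' hy (by norm_num), ← rpow_natCast]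
  norm_num

lemma cube_le_rpow_mul_rpow_of_le {c y ι : ℝ} (hy : 0 ≤ y) (hyc : y ≤ c) (hι : ι ≤ 1) :
    y ^ 3 ≤ c ^ (1 - ι) * y ^ (2 + ι) := by
  rw [cube_eq_rpow_mul_rpow hy ι]
  gcongr

lemma min_add_add_sq_cube_le {c y ι : ℝ} (hc : 1 ≤ c) (hy : 0 ≤ y) (hι0 : 0 ≤ ι) (hι1 : ι ≤ 1) :
    min (c ^ 3 + y + y ^ 2) (y ^ 3) ≤ 3 * c ^ (1 - ι) * y ^ (2 + ι) := by
  have hcι : 1 ≤ c ^ (1 - ι) := one_le_rpow hc (by linarith)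
  have hyι : 0 ≤ y ^ (2 + ι) := rpow_nonneg hy _
  have hM : 0 ≤ c ^ (1 - ι) * y ^ (2 + ι) := by positivity
  rcases le_total y c with hyc | hcy
  · have := cube_le_rpow_mul_rpow_of_le hy hyc hι1
    linarith [min_le_right (c ^ 3 + y + y ^ 2) (y ^ 3)]
  · have hy1 : 1 ≤ y := hc.trans hcy
    have hc3 : c ^ 3 ≤ c ^ (1 - ι) * y ^ (2 + ι) := by
      rw [cube_eq_rpow_mul_rpow (zero_le_one.trans hc) ι]
      gcongr
    have hy_le : y ≤ c ^ (1 - ι) * y ^ (2 + ι) :=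
      (self_le_rpow_of_one_le hy1 (by linarith)).trans (le_mul_of_one_le_left hyι hcι)
    have hy2_le : y ^ 2 ≤ c ^ (1 - ι) * y ^ (2 + ι) := by
      rw [← rpow_two]
      exact (rpow_le_rpow_of_exponent_le hy1 (by linarith)).trans (le_mul_of_one_le_left hyι hcι)
    linarith [min_le_left (c ^ 3 + y + y ^ 2) (y ^ 3)]

theorem scaled_min_bound_rpow
    (x γ δ ι : ℝ) (hx : 0 ≤ x) (hγ : 0 < γ) (hδ : 0 < δ) (hγδ : 1 ≤ γ * δ)
    (hι0 : 0 ≤ ι) (hι1 : ι ≤ 1) :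
    min (γ * δ + γ * x + γ ^ 2 * x ^ 2) (γ ^ 3 * x ^ 3)
        ≤ 3 * (γ * δ) ^ ((1 - ι) / 3) * (γ * x) ^ (2 + ι) ∧
    γ⁻¹ * δ⁻¹ * min (γ * δ + γ * x + γ ^ 2 * x ^ 2) (γ ^ 3 * x ^ 3)
        ≤ 3 * γ ^ ((4 + 2 * ι) / 3) * δ ^ (-(2 + ι) / 3) * x ^ (2 + ι) := by
  set c := (γ * δ) ^ ((3 : ℕ)⁻¹ : ℝ)
  have hc : 1 ≤ c := one_le_rpow hγδ (by positivity)
  have hc3 : c ^ 3 = γ * δ := rpow_inv_natCast_pow (by positivity) three_ne_zero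
  have hcι : c ^ (1 - ι) = (γ * δ) ^ ((1 - ι) / 3) := by
    rw [← rpow_mul (by positivity)]
    ring_nf
  have key := min_add_add_sq_cube_le hc (mul_nonneg hγ.le hx) hι0 hι1
  rw [hc3, hcι, mul_pow, mul_pow] at key
  refine ⟨key, ?_⟩
  have hγ' : γ⁻¹ * γ ^ ((1 - ι) / 3) * γ ^ (2 + ι) = γ ^ ((4 + 2 * ι) / 3) := by
    rw [← rpow_neg_one, ← rpow_add hγ, ← rpow_add hγ]
    ring_nf
  have hδ' : δ⁻¹ * δ ^ ((1 - ι) / 3) = δ ^ (-(2 + ι) / 3) := by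
    rw [← rpow_neg_one, ← rpow_add hδ]
    ring_nf
  calc γ⁻¹ * δ⁻¹ * min (γ * δ + γ * x + γ ^ 2 * x ^ 2) (γ ^ 3 * x ^ 3)
      ≤ γ⁻¹ * δ⁻¹ * (3 * (γ * δ) ^ ((1 - ι) / 3) * (γ * x) ^ (2 + ι)) := by gcongr
    _ = 3 * (γ⁻¹ * γ ^ ((1 - ι) / 3) * γ ^ (2 + ι)) * (δ⁻¹ * δ ^ ((1 - ι) / 3)) * x ^ (2 + ι) := by
      rw [mul_rpow hγ.le hδ.le, mul_rpow hγ.le hx]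
      ring
    _ = _ := by rw [hγ', hδ']
end
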